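/- Monotone domination of the EM map beyond the truth: if 1/2 < α* ≤ α ≤ 1 and θ ≥ θ* > 0, then F(θ, α) ≤ F(θ, α*). -/
import Mathlib


open MeasureTheory

/-- The standard Gaussian density. -/
noncomputable def stdGauss (y : ℝ) : ℝ :=
  (Real.sqrt (2 * Real.pi))⁻¹ * Real.exp (-y ^ 2 / 2)

/-- Density of the two-component mixture `α*·N(θ*,1) + (1-α*)·N(-θ*,1)`. -/
noncomputable def mixDen (θs αs y : ℝ) : ℝ :=
  αs * stdGauss (y - θs) + (1 - αs) * stdGauss (y + θs)

/-- The EM/Sinkhorn-EM map `F(θ, α)`. -/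
noncomputable def Fmap (θs αs θ α : ℝ) : ℝ :=
  ∫ y, y * (α * Real.exp (θ * y) - (1 - α) * Real.exp (-(θ * y))) /
      (α * Real.exp (θ * y) + (1 - α) * Real.exp (-(θ * y))) * mixDen θs αs y

/-- The tilting equation map `G(θ, α)`. -/
noncomputable def Gmap (θs αs θ α : ℝ) : ℝ :=
  ∫ y, α * Real.exp (θ * y) /
      (α * Real.exp (θ * y) + (1 - α) * Real.exp (-(θ * y))) * mixDen θs αs y

/-- The (normalized) `θ`-derivative of the tilting equation, `G_θ(θ, α)`. -/
noncomputable def Gtheta (θs αs θ α : ℝ) : ℝ :=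
  ∫ y, y / (α * Real.exp (θ * y) + (1 - α) * Real.exp (-(θ * y))) ^ 2 * mixDen θs αs y

section Aux

lemma stdGauss_pos (y : ℝ) : 0 < stdGauss y := by
  unfold stdGauss
  have h : 0 < Real.sqrt (2 * Real.pi) := Real.sqrt_pos.mpr (by positivity)
  positivity

lemma continuous_stdGauss : Continuous stdGauss := by
  unfold stdGauss; fun_prop

lemma continuous_mixDen (θs αs : ℝ) : Continuous (fun y => mixDen θs αs y) := by
  unfold mixDen stdGauss
  fun_prop

lemma mixDen_nonneg {θs αs : ℝ} (h0 : 0 ≤ αs) (h1 : αs ≤ 1) (y : ℝ) :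
    0 ≤ mixDen θs αs y := by
  unfold mixDen
  have g1 := (stdGauss_pos (y - θs)).le
  have g2 := (stdGauss_pos (y + θs)).le
  have : 0 ≤ 1 - αs := by linarith
  positivity

lemma integrable_stdGauss : Integrable stdGauss := by
  have h : Integrable (fun x : ℝ => Real.exp (-(1/2) * x ^ 2)) :=
    integrable_exp_neg_mul_sq (by norm_num)
  have h2 := h.const_mul (Real.sqrt (2 * Real.pi))⁻¹
  refine h2.congr (Filter.Eventually.of_forall fun x => ?_)
  simp only []
  unfold stdGauss
  rw [show -(1/2 : ℝ) * x ^ 2 = -x ^ 2 / 2 by ring]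

lemma integrable_abs_mul_stdGauss_base : Integrable (fun x : ℝ => |x| * stdGauss x) := by
  have h := ((integrable_mul_exp_neg_mul_sq (show (0:ℝ) < 1/2 by norm_num)).abs).const_mul
    (Real.sqrt (2 * Real.pi))⁻¹
  refine h.congr (Filter.Eventually.of_forall fun x => ?_)
  simp only []
  unfold stdGauss
  rw [abs_mul, abs_of_pos (Real.exp_pos _), show -(1/2 : ℝ) * x ^ 2 = -x ^ 2 / 2 by ring]
  ring

lemma integrable_abs_mul_stdGauss (c : ℝ) :
    Integrable (fun y : ℝ => |y| * stdGauss (y - c)) := by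
  have hbase : Integrable (fun x : ℝ => (|x| + |c|) * stdGauss x) := by
    have h1 := integrable_abs_mul_stdGauss_base
    have h2 := integrable_stdGauss.const_mul (abs c)
    refine (h1.add h2).congr (Filter.Eventually.of_forall fun x => ?_)
    simp only [Pi.add_apply]
    ring
  have hshift := hbase.comp_sub_right c
  have hcont : Continuous (fun y : ℝ => |y| * stdGauss (y - c)) :=
    (continuous_abs).mul (continuous_stdGauss.comp (by fun_prop))
  refine hshift.mono' hcont.aestronglyMeasurable (Filter.Eventually.of_forall fun y => ?_)
  have h1 : |y| ≤ |y - c| + |c| := by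
    have := abs_sub_abs_le_abs_sub y c
    have := abs_nonneg (y - c)
    linarith [abs_sub_abs_le_abs_sub y c]
  have h2 := (stdGauss_pos (y - c)).le
  rw [Real.norm_eq_abs, abs_mul, abs_abs, abs_of_nonneg h2]
  exact mul_le_mul_of_nonneg_right h1 h2

lemma integrable_abs_mul_mixDen (θs αs : ℝ) :
    Integrable (fun y : ℝ => |y| * mixDen θs αs y) := by
  have h1 := (integrable_abs_mul_stdGauss θs).const_mul αs
  have h2 := (integrable_abs_mul_stdGauss (-θs)).const_mul (1 - αs)
  refine (h1.add h2).congr (Filter.Eventually.of_forall fun y => ?_)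
  simp only [Pi.add_apply, mixDen, sub_neg_eq_add]
  ring

lemma integrable_Fintegrand (θs αs θ α : ℝ) (hαs0 : 0 ≤ αs) (hαs1 : αs ≤ 1)
    (hα0 : 0 < α) (hα1 : α ≤ 1) :
    Integrable (fun y : ℝ => y * (α * Real.exp (θ * y) - (1 - α) * Real.exp (-(θ * y))) /
      (α * Real.exp (θ * y) + (1 - α) * Real.exp (-(θ * y))) * mixDen θs αs y) := by
  have hden : ∀ y : ℝ, 0 < α * Real.exp (θ * y) + (1 - α) * Real.exp (-(θ * y)) := by
    intro y
    have h1 := Real.exp_pos (θ * y)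
    have h2 := Real.exp_pos (-(θ * y))
    nlinarith
  have hcont : Continuous (fun y : ℝ => y * (α * Real.exp (θ * y) - (1 - α) * Real.exp (-(θ * y))) /
      (α * Real.exp (θ * y) + (1 - α) * Real.exp (-(θ * y))) * mixDen θs αs y) := by
    refine (Continuous.div (by fun_prop) (by fun_prop) fun y => (hden y).ne').mul
      (continuous_mixDen θs αs)
  refine (integrable_abs_mul_mixDen θs αs).mono' hcont.aestronglyMeasurable
    (Filter.Eventually.of_forall fun y => ?_)
  have hm := mixDen_nonneg (θs := θs) hαs0 hαs1 y
  have h1 := Real.exp_pos (θ * y)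
  have h2 := Real.exp_pos (-(θ * y))
  rw [Real.norm_eq_abs, abs_mul, abs_of_nonneg hm, abs_div, abs_mul]
  rw [abs_of_pos (hden y)]
  refine mul_le_mul_of_nonneg_right ?_ hm
  rw [div_le_iff₀ (hden y)]
  have hnum : |α * Real.exp (θ * y) - (1 - α) * Real.exp (-(θ * y))|
      ≤ α * Real.exp (θ * y) + (1 - α) * Real.exp (-(θ * y)) := by
    rw [abs_le]; constructor <;> nlinarith
  calc |y| * |α * Real.exp (θ * y) - (1 - α) * Real.exp (-(θ * y))|
      ≤ |y| * (α * Real.exp (θ * y) + (1 - α) * Real.exp (-(θ * y))) :=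
        mul_le_mul_of_nonneg_left hnum (abs_nonneg y)
    _ = _ := by ring

lemma alg_key (a b u v : ℝ) (hb : 1/2 < b) (hba : b ≤ a) (ha1 : a ≤ 1)
    (hv : 1 ≤ v) (hu : v ≤ u) :
    (b*v + (1-b)) * (a + (1-a)*u) * (b + (1-b)*u) ≤
    (b + (1-b)*v) * (a*u + (1-a)) * (b*u + (1-b)) := by
  have h1 : (b*v + (1-b)) * (b + (1-b)*u) ≤ (b + (1-b)*v) * (b*u + (1-b)) := by nlinarith
  have h2 : a + (1-a)*u ≤ a*u + (1-a) := by nlinarith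
  have p1 : 0 ≤ a + (1-a)*u := by nlinarith
  have q1 : 0 ≤ b + (1-b)*v := by nlinarith
  have q2 : 0 ≤ b*u + (1-b) := by nlinarith
  have p2 : 0 ≤ (b + (1-b)*v) * (b*u + (1-b)) := mul_nonneg q1 q2
  nlinarith [mul_le_mul h1 h2 p1 p2]

lemma mixDen_eq (θs αs y : ℝ) :
    mixDen θs αs y = (Real.sqrt (2 * Real.pi))⁻¹ * Real.exp (-(y^2 + θs^2)/2) *
      (αs * Real.exp (θs * y) + (1 - αs) * (Real.exp (θs * y))⁻¹) := by
  have h1 : Real.exp (-(y^2 + θs^2)/2) * Real.exp (θs * y) = Real.exp (-(y - θs)^2/2) := by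
    rw [← Real.exp_add]; congr 1; ring
  have h2 : Real.exp (-(y^2 + θs^2)/2) * (Real.exp (θs * y))⁻¹ = Real.exp (-(y + θs)^2/2) := by
    rw [← Real.exp_neg, ← Real.exp_add]; congr 1; ring
  rw [mixDen, stdGauss, stdGauss, ← h1, ← h2]; ring

set_option maxHeartbeats 1000000 in
lemma pointwise_half (θs αs θ α : ℝ) (hθs : 0 < θs) (hαs : 1/2 < αs)
    (hα : αs ≤ α) (hα1 : α ≤ 1) (hθ : θs ≤ θ) (y : ℝ) (hy : 0 ≤ y) :
    0 ≤ (y * (αs * Real.exp (θ * y) - (1 - αs) * Real.exp (-(θ * y))) /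
          (αs * Real.exp (θ * y) + (1 - αs) * Real.exp (-(θ * y))) * mixDen θs αs y
        - y * (α * Real.exp (θ * y) - (1 - α) * Real.exp (-(θ * y))) /
          (α * Real.exp (θ * y) + (1 - α) * Real.exp (-(θ * y))) * mixDen θs αs y)
      + ((-y) * (αs * Real.exp (θ * (-y)) - (1 - αs) * Real.exp (-(θ * (-y)))) /
          (αs * Real.exp (θ * (-y)) + (1 - αs) * Real.exp (-(θ * (-y)))) * mixDen θs αs (-y)
        - (-y) * (α * Real.exp (θ * (-y)) - (1 - α) * Real.exp (-(θ * (-y)))) /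
          (α * Real.exp (θ * (-y)) + (1 - α) * Real.exp (-(θ * (-y)))) * mixDen θs αs (-y)) := by
  have e1 : Real.exp (-(θ * y)) = (Real.exp (θ * y))⁻¹ := Real.exp_neg _
  have e2 : Real.exp (θ * (-y)) = (Real.exp (θ * y))⁻¹ := by
    rw [show θ * (-y) = -(θ * y) by ring, Real.exp_neg]
  have e3 : Real.exp (-(θ * (-y))) = Real.exp (θ * y) := by
    rw [show -(θ * (-y)) = θ * y by ring]
  have m1 := mixDen_eq θs αs y
  have m2 : mixDen θs αs (-y) = (Real.sqrt (2 * Real.pi))⁻¹ * Real.exp (-(y^2 + θs^2)/2) *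
      (αs * (Real.exp (θs * y))⁻¹ + (1 - αs) * Real.exp (θs * y)) := by
    rw [mixDen_eq θs αs (-y), show (-y)^2 = y^2 by ring,
      show θs * (-y) = -(θs * y) by ring, Real.exp_neg, inv_inv]
  rw [e1, e2, e3, m1, m2]
  set E := Real.exp (θ * y) with hEdef
  set s := Real.exp (θs * y) with hsdef
  set K := (Real.sqrt (2 * Real.pi))⁻¹ * Real.exp (-(y^2 + θs^2)/2) with hKdef
  have hE0 : 0 < E := Real.exp_pos _
  have hs0 : 0 < s := Real.exp_pos _
  have hs1 : 1 ≤ s := Real.one_le_exp (by positivity)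
  have hsE : s ≤ E := Real.exp_le_exp.mpr (mul_le_mul_of_nonneg_right hθ hy)
  have hK0 : 0 < K := by
    have h : 0 < Real.sqrt (2 * Real.pi) := Real.sqrt_pos.mpr (by positivity)
    have := Real.exp_pos (-(y^2 + θs^2)/2)
    positivity
  have hE0' : 0 < E⁻¹ := by positivity
  have hs0' : 0 < s⁻¹ := by positivity
  have hα0 : (0:ℝ) < α := by linarith
  have hαs0 : (0:ℝ) < αs := by linarith
  have hα1' : (0:ℝ) ≤ 1 - α := by linarith
  have hαs1' : (0:ℝ) ≤ 1 - αs := by linarith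
  have hdA : 0 < α * E + (1 - α) * E⁻¹ :=
    add_pos_of_pos_of_nonneg (mul_pos hα0 hE0) (mul_nonneg hα1' hE0'.le)
  have hdB : 0 < αs * E + (1 - αs) * E⁻¹ :=
    add_pos_of_pos_of_nonneg (mul_pos hαs0 hE0) (mul_nonneg hαs1' hE0'.le)
  have hdA' : 0 < α * E⁻¹ + (1 - α) * E :=
    add_pos_of_pos_of_nonneg (mul_pos hα0 hE0') (mul_nonneg hα1' hE0.le)
  have hdB' : 0 < αs * E⁻¹ + (1 - αs) * E :=
    add_pos_of_pos_of_nonneg (mul_pos hαs0 hE0') (mul_nonneg hαs1' hE0.le)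
  set D : ℝ := (α * E + (1 - α) * E⁻¹) * (αs * E + (1 - αs) * E⁻¹) *
      ((α * E⁻¹ + (1 - α) * E) * (αs * E⁻¹ + (1 - αs) * E)) * (s * E^2) with hDdef
  have hD0 : 0 < D := by positivity
  set Q : ℝ := 2 * (α - αs) *
      ((αs + (1 - αs) * s^2) * (α * E^2 + (1 - α)) * (αs * E^2 + (1 - αs))
        - (αs * s^2 + (1 - αs)) * (α + (1 - α) * E^2) * (αs + (1 - αs) * E^2)) with hQdef
  have hQ0 : 0 ≤ Q := by
    refine mul_nonneg (by linarith) (sub_nonneg.mpr ?_)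
    have h1 : (1:ℝ) ≤ s^2 := by
      calc (1:ℝ) = 1^2 := by norm_num
      _ ≤ s^2 := pow_le_pow_left₀ zero_le_one hs1 2
    have h2 : s^2 ≤ E^2 := pow_le_pow_left₀ hs0.le hsE 2
    exact alg_key α αs (E^2) (s^2) hαs hα hα1 h1 h2
  have hgoal : ((y * (αs * E - (1 - αs) * E⁻¹) / (αs * E + (1 - αs) * E⁻¹) *
          (K * (αs * s + (1 - αs) * s⁻¹))
        - y * (α * E - (1 - α) * E⁻¹) / (α * E + (1 - α) * E⁻¹) *
          (K * (αs * s + (1 - αs) * s⁻¹)))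
      + ((-y) * (αs * E⁻¹ - (1 - αs) * E) / (αs * E⁻¹ + (1 - αs) * E) *
          (K * (αs * s⁻¹ + (1 - αs) * s))
        - (-y) * (α * E⁻¹ - (1 - α) * E) / (α * E⁻¹ + (1 - α) * E) *
          (K * (αs * s⁻¹ + (1 - αs) * s)))) * D = y * K * Q := by
    rw [hDdef, hQdef]
    field_simp
    ring
  have hbig := (eq_div_iff hD0.ne').mpr hgoal
  rw [hbig]
  exact div_nonneg (mul_nonneg (mul_nonneg hy hK0.le) hQ0) hD0.le

lemma pointwise (θs αs θ α : ℝ) (hθs : 0 < θs) (hαs : 1/2 < αs)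
    (hα : αs ≤ α) (hα1 : α ≤ 1) (hθ : θs ≤ θ) (y : ℝ) :
    0 ≤ (y * (αs * Real.exp (θ * y) - (1 - αs) * Real.exp (-(θ * y))) /
          (αs * Real.exp (θ * y) + (1 - αs) * Real.exp (-(θ * y))) * mixDen θs αs y
        - y * (α * Real.exp (θ * y) - (1 - α) * Real.exp (-(θ * y))) /
          (α * Real.exp (θ * y) + (1 - α) * Real.exp (-(θ * y))) * mixDen θs αs y)
      + ((-y) * (αs * Real.exp (θ * (-y)) - (1 - αs) * Real.exp (-(θ * (-y)))) /
          (αs * Real.exp (θ * (-y)) + (1 - αs) * Real.exp (-(θ * (-y)))) * mixDen θs αs (-y)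
        - (-y) * (α * Real.exp (θ * (-y)) - (1 - α) * Real.exp (-(θ * (-y)))) /
          (α * Real.exp (θ * (-y)) + (1 - α) * Real.exp (-(θ * (-y)))) * mixDen θs αs (-y)) := by
  rcases le_total 0 y with hy | hy
  · exact pointwise_half θs αs θ α hθs hαs hα hα1 hθ y hy
  · have h := pointwise_half θs αs θ α hθs hαs hα hα1 hθ (-y) (by linarith)
    rw [neg_neg] at h
    linarith

end Aux

/-- monotone domination of the EM map beyond the truth: if
`1/2 < α* ≤ α ≤ 1` and `θ ≥ θ* > 0`, then `F(θ, α) ≤ F(θ, α*)`. -/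
theorem F_le_F_beyond_truth
    (θs αs : ℝ) (hθs : 0 < θs) (hαs : 1 / 2 < αs) (hαs1 : αs < 1)
    (α : ℝ) (hα : αs ≤ α) (hα1 : α ≤ 1)
    (θ : ℝ) (hθ : θs ≤ θ) :
    Fmap θs αs θ α ≤ Fmap θs αs θ αs := by
  have hαs0 : (0:ℝ) ≤ αs := by linarith
  have hα0 : (0:ℝ) < α := by linarith
  have hIa := integrable_Fintegrand θs αs θ α hαs0 hαs1.le hα0 hα1
  have hIb := integrable_Fintegrand θs αs θ αs hαs0 hαs1.le (by linarith) hαs1.le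
  rw [Fmap, Fmap, ← sub_nonneg, ← integral_sub hIb hIa]
  set g : ℝ → ℝ := fun y =>
    y * (αs * Real.exp (θ * y) - (1 - αs) * Real.exp (-(θ * y))) /
      (αs * Real.exp (θ * y) + (1 - αs) * Real.exp (-(θ * y))) * mixDen θs αs y
    - y * (α * Real.exp (θ * y) - (1 - α) * Real.exp (-(θ * y))) /
      (α * Real.exp (θ * y) + (1 - α) * Real.exp (-(θ * y))) * mixDen θs αs y with hgdef
  have hg : Integrable g := hIb.sub hIa
  have hgneg : Integrable (fun y => g (-y)) := hg.comp_neg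
  have key : ∫ y, (g y + g (-y)) = 2 * ∫ y, g y := by
    rw [integral_add hg hgneg, integral_neg_eq_self g]
    ring
  have h2 : 0 ≤ ∫ y, (g y + g (-y)) := by
    refine integral_nonneg fun y => ?_
    have := pointwise θs αs θ α hθs hαs hα hα1 hθ y
    simpa [hgdef] using this
  linarith [key ▸ h2]
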